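/- The set of isolated subgroups of Γ having an immediate successor in isolated(Γ) is exactly the set of dual T-isolated subgroups: IP(isolated(Γ)) = {dH_t | t ∈ T}. -/

import Mathlib

/-- The carrier of Γ: functions `T → G` with well-ordered support. -/
def Gamma (T G : Type*) [LinearOrder T] [Zero G] [LT G] : Set (T → G) :=
  {f | (Function.support f).IsWF}

/-- The (left-to-right lexicographic) order on functions `T → G`:
`f ≤ g` iff `f = g` or `f` and `g` agree before some point `t` at which `f t < g t`. -/
def lexLE {T G : Type*} [LinearOrder T] [LT G] (f g : T → G) : Prop :=
  f = g ∨ ∃ t, (∀ s, s < t → f s = g s) ∧ f t < g t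

/-- `H` is an isolated subgroup of Γ: a subgroup of Γ that is convex for the
lexicographic order. -/
def IsIsolated (T G : Type*) [LinearOrder T] [AddCommGroup G] [LinearOrder G]
    [IsOrderedAddMonoid G]
    (H : Set (T → G)) : Prop :=
  H ⊆ Gamma T G ∧ (0 : T → G) ∈ H ∧ (∀ f ∈ H, ∀ g ∈ H, f + g ∈ H) ∧
  (∀ f ∈ H, -f ∈ H) ∧
  ∀ h ∈ H, ∀ g ∈ Gamma T G, lexLE 0 g → lexLE g h → g ∈ H

/-- The T-isolated subgroup `H_t`: elements of Γ vanishing strictly before `t`. -/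
def Ht (T G : Type*) [LinearOrder T] [Zero G] [LT G] (t : T) : Set (T → G) :=
  {f ∈ Gamma T G | ∀ s, s < t → f s = 0}

/-- The dual T-isolated subgroup `dH_t`: elements of Γ vanishing at and before `t`. -/
def dHt (T G : Type*) [LinearOrder T] [Zero G] [LT G] (t : T) : Set (T → G) :=
  {f ∈ Gamma T G | ∀ s, s ≤ t → f s = 0}

/-- `X` and `Y` are immediate neighbors in `B` (ordered by inclusion). -/
def ImmNbr {α : Type*} (B : Set (Set α)) (X Y : Set α) : Prop :=
  X ∈ B ∧ Y ∈ B ∧ X ⊂ Y ∧ ¬∃ Z ∈ B, X ⊂ Z ∧ Z ⊂ Y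

/-- `ISet B` is the set of members of `B` having an immediate predecessor in `B`. -/
def ISet {α : Type*} (B : Set (Set α)) : Set (Set α) := {Y | ∃ X, ImmNbr B X Y}

/-- `IPSet B` is the set of members of `B` having an immediate successor in `B`. -/
def IPSet {α : Type*} (B : Set (Set α)) : Set (Set α) := {X | ∃ Y, ImmNbr B X Y}

/-!
Because `G` is archimedean, an isolated subgroup `H` of `Γ` is determined by the set of
coordinates at which some element of `H` is nonzero: every `g ∈ Γ` supported there lies in `H`,
since a suitable multiple of an element of `H` with positive leading term dominates `g` or `-g`.
That set of coordinates is an upper set of `T`, and conversely the elements of `Γ` supported in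
an upper set form an isolated subgroup. This identifies `isolated(Γ)` with the upper sets of `T`
as ordered sets. In a linear order an upper set `U` has an immediate successor exactly when its
complement has a largest element `t`, i.e. `U = Ioi t`, with successor `Ici t`; and the
subgroup corresponding to `Ioi t` is `dH_t`.
-/

open Set Function

section ImmediateSuccessors

variable {α β : Type*} {A : Set (Set β)} {F : Set β → Set α}

lemma immNbr_image_iff (hF : ∀ X ∈ A, ∀ Y ∈ A, F X ⊆ F Y ↔ X ⊆ Y) {X Y : Set β}
    (hX : X ∈ A) (hY : Y ∈ A) : ImmNbr (F '' A) (F X) (F Y) ↔ ImmNbr A X Y := by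
  have hss : ∀ X ∈ A, ∀ Y ∈ A, F X ⊂ F Y ↔ X ⊂ Y := fun X hX Y hY => by
    simp only [ssubset_iff_subset_not_subset, hF X hX Y hY, hF Y hY X hX]
  unfold ImmNbr
  simp only [mem_image_of_mem F hX, mem_image_of_mem F hY, hX, hY, hss X hX Y hY, true_and,
    exists_mem_image]
  exact and_congr_right fun _ => not_congr <| exists_congr fun Z => and_congr_right fun hZ => by
    rw [hss X hX Z hZ, hss Z hZ Y hY]

lemma IPSet_image (hF : ∀ X ∈ A, ∀ Y ∈ A, F X ⊆ F Y ↔ X ⊆ Y) :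
    IPSet (F '' A) = F '' IPSet A := by
  ext S
  constructor
  · rintro ⟨_, hS, ⟨Y, hY, rfl⟩, hgap⟩
    obtain ⟨X, hX, rfl⟩ := hS
    exact ⟨X, ⟨Y, (immNbr_image_iff hF hX hY).1 ⟨mem_image_of_mem F hX, ⟨Y, hY, rfl⟩, hgap⟩⟩, rfl⟩
  · rintro ⟨X, ⟨Y, hXY⟩, rfl⟩
    exact ⟨F Y, (immNbr_image_iff hF hXY.1 hXY.2.1).2 hXY⟩

lemma IPSet_setOf_isUpperSet (T : Type*) [LinearOrder T] :
    IPSet {U : Set T | IsUpperSet U} = range Ioi := by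
  ext U
  constructor
  · rintro ⟨V, hU, hV, hUV, hgap⟩
    obtain ⟨t, htV, htU⟩ := exists_of_ssubset hUV
    refine ⟨t, Set.ext fun s => ⟨fun hts => ?_, fun hs => ?_⟩⟩
    · by_contra hsU
      -- `U ∪ Ici s` would lie strictly between `U` and `V`
      refine hgap ⟨U ∪ Ici s, hU.union (isUpperSet_Ici s),
        (ssubset_iff_of_subset subset_union_left).2 ⟨s, Or.inr le_rfl, hsU⟩,
        (ssubset_iff_of_subset (union_subset hUV.subset fun x hx => hV (hts.le.trans hx) htV)).2
          ⟨t, htV, ?_⟩⟩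
      rintro (h | h)
      exacts [htU h, (not_le.2 hts) h]
    · by_contra! hst
      exact htU (hU (not_lt.1 hst) hs)
  · rintro ⟨t, rfl⟩
    refine ⟨Ici t, isUpperSet_Ioi t, isUpperSet_Ici t, Ioi_ssubset_Ici_self, ?_⟩
    rintro ⟨Z, hZ, hlt, hgt⟩
    obtain ⟨x, hxZ, hx⟩ := exists_of_ssubset hlt
    have htZ : t ∈ Z := hZ (not_lt.1 hx) hxZ
    exact not_subset_of_ssubset hgt fun y hy => hZ hy htZ

end ImmediateSuccessors

lemma forall_le_eq_zero_of_lexLE {T G : Type*} [LinearOrder T] [Preorder G] [Zero G]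
    {f g : T → G} {r : T} (h0f : lexLE 0 f) (hfg : lexLE f g) (hg : ∀ s ≤ r, g s = 0) :
    ∀ s ≤ r, f s = 0 := by
  rcases h0f with rfl | ⟨u, hu, hfu⟩
  · exact fun _ _ => rfl
  suffices hru : r < u from fun s hs => (hu s (hs.trans_lt hru)).symm
  by_contra! hur
  rcases hfg with rfl | ⟨v, hv, hfv⟩
  · exact hfu.ne' (hg u hur)
  rcases lt_or_ge u v with huv | hvu
  · exact hfu.ne' ((hv u huv).trans (hg u hur))
  · have hfv_nonneg : 0 ≤ f v := hvu.lt_or_eq.elim (fun h => (hu v h).le) (fun h => h ▸ hfu.le)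
    exact (hfv_nonneg.trans_lt (hfv.trans_eq (hg v (hvu.trans hur)))).false

section Gamma

variable {T G : Type*} [LinearOrder T]

lemma zero_mem_Gamma [Zero G] [LT G] : (0 : T → G) ∈ Gamma T G := by
  simp [Gamma]

lemma neg_mem_Gamma [SubtractionMonoid G] [LT G] {f : T → G} (hf : f ∈ Gamma T G) : -f ∈ Gamma T G := by
  simpa [Gamma] using hf

lemma add_mem_Gamma [AddZeroClass G] [LT G] {f g : T → G} (hf : f ∈ Gamma T G) (hg : g ∈ Gamma T G) :
    f + g ∈ Gamma T G :=
  (hf.union hg).mono (support_add f g)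

lemma single_mem_Gamma [Zero G] [LT G] (t : T) (a : G) : Pi.single t a ∈ Gamma T G :=
  (finite_singleton t).isWF.mono Pi.support_single_subset

lemma exists_lead_of_mem_Gamma [Zero G] [LT G] {f : T → G} (hf : f ∈ Gamma T G) {t : T} (ht : f t ≠ 0) :
    ∃ s ≤ t, f s ≠ 0 ∧ ∀ r < s, f r = 0 :=
  ⟨hf.min ⟨t, ht⟩, hf.min_le _ ht, hf.min_mem _,
    fun _ hr => by_contra fun hr0 => hf.not_lt_min _ hr0 hr⟩

variable (T G) in
def gammaOn [Zero G] [LT G] (U : Set T) : Set (T → G) :=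
  {f ∈ Gamma T G | support f ⊆ U}

lemma dHt_eq_gammaOn [Zero G] [LT G] (t : T) : dHt T G t = gammaOn T G (Ioi t) := by
  ext f
  simp only [dHt, gammaOn, mem_ofPred_eq, support_subset_iff, mem_Ioi]
  refine and_congr_right fun _ => forall_congr' fun s => ?_
  rw [not_imp_comm, not_lt]

lemma isIsolated_gammaOn [AddCommGroup G] [LinearOrder G] [IsOrderedAddMonoid G] {U : Set T} (hU : IsUpperSet U) : IsIsolated T G (gammaOn T G U) := by
  refine ⟨fun f hf => hf.1, ⟨zero_mem_Gamma, by simp⟩,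
    fun f hf g hg => ⟨add_mem_Gamma hf.1 hg.1, (support_add f g).trans (union_subset hf.2 hg.2)⟩,
    fun f hf => ⟨neg_mem_Gamma hf.1, (support_neg f).le.trans hf.2⟩, ?_⟩
  intro h hh g hg h0g hgh
  refine ⟨hg, fun r hr => by_contra fun hrU => hr ?_⟩
  refine forall_le_eq_zero_of_lexLE h0g hgh (fun s hs => ?_) r le_rfl
  exact by_contra fun hs0 => hrU (hU hs (hh.2 hs0))

lemma gammaOn_subset_gammaOn_iff [Zero G] [LT G] [Nontrivial G] {U V : Set T} :
    gammaOn T G U ⊆ gammaOn T G V ↔ U ⊆ V := by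
  refine ⟨fun hUV t ht => ?_, fun hUV f hf => ⟨hf.1, hf.2.trans hUV⟩⟩
  obtain ⟨a, ha⟩ := exists_ne (0 : G)
  have hmem : Pi.single t a ∈ gammaOn T G U :=
    ⟨single_mem_Gamma t a, Pi.support_single_subset.trans (singleton_subset_iff.2 ht)⟩
  exact (hUV hmem).2 (by simpa using ha)

end Gamma

namespace IsIsolated

variable {T G : Type*} [LinearOrder T] [AddCommGroup G] [LinearOrder G] [IsOrderedAddMonoid G]
  {H : Set (T → G)}

lemma nsmul_mem (hH : IsIsolated T G H) {f : T → G} (hf : f ∈ H) : ∀ n : ℕ, n • f ∈ H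
  | 0 => by simpa using hH.2.1
  | n + 1 => by simpa [succ_nsmul] using hH.2.2.1 _ (hH.nsmul_mem hf n) _ hf

lemma exists_pos_lead (hH : IsIsolated T G H) {h : T → G} (hh : h ∈ H) {t : T} (ht : h t ≠ 0) :
    ∃ h' ∈ H, ∃ s ≤ t, (∀ r < s, h' r = 0) ∧ 0 < h' s := by
  obtain ⟨s, hst, hs, hvan⟩ := exists_lead_of_mem_Gamma (hH.1 hh) ht
  rcases hs.lt_or_gt with hneg | hpos
  · exact ⟨-h, hH.2.2.2.1 h hh, s, hst, fun r hr => by simp [hvan r hr], by simpa using hneg⟩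
  · exact ⟨h, hh, s, hst, hvan, hpos⟩

lemma mem_of_pos_lead [Archimedean G] (hH : IsIsolated T G H) {g : T → G} (hg : g ∈ Gamma T G)
    {s : T} (hg0 : ∀ r < s, g r = 0) (hgs : 0 < g s) {h : T → G} (hh : h ∈ H) {t : T}
    (hts : t ≤ s) (ht : h t ≠ 0) : g ∈ H := by
  obtain ⟨h', hh', s₀, hs₀t, hh'0, hh's₀⟩ := hH.exists_pos_lead hh ht
  obtain ⟨n, hn⟩ := Archimedean.arch (g s₀) hh's₀
  -- `(n + 1) • h'` dominates `g` lexicographically, already at the coordinate `s₀`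
  refine hH.2.2.2.2 _ (hH.nsmul_mem hh' (n + 1)) g hg
    (Or.inr ⟨s, fun r hr => (hg0 r hr).symm, hgs⟩) (Or.inr ⟨s₀, fun r hr => ?_, ?_⟩)
  · simp [hg0 r (hr.trans_le (hs₀t.trans hts)), hh'0 r hr]
  · simpa [succ_nsmul] using hn.trans_lt (lt_add_of_pos_right _ hh's₀)

lemma mem_of_support_subset [Archimedean G] (hH : IsIsolated T G H) {g : T → G}
    (hg : g ∈ Gamma T G) (hsupp : support g ⊆ ⋃ h ∈ H, support h) : g ∈ H := by
  by_cases hg0 : g = 0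
  · exact hg0 ▸ hH.2.1
  obtain ⟨t, ht⟩ := ne_iff.1 hg0
  obtain ⟨s, -, hs, hvan⟩ := exists_lead_of_mem_Gamma hg ht
  obtain ⟨h, hh, hhs⟩ := mem_iUnion₂.1 (hsupp hs)
  rcases hs.lt_or_gt with hneg | hpos
  · simpa using hH.2.2.2.1 _ (hH.mem_of_pos_lead (neg_mem_Gamma hg)
      (fun r hr => by simp [hvan r hr]) (by simpa using hneg) hh le_rfl hhs)
  · exact hH.mem_of_pos_lead hg hvan hpos hh le_rfl hhs

lemma eq_gammaOn [Archimedean G] (hH : IsIsolated T G H) :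
    H = gammaOn T G (⋃ h ∈ H, support h) :=
  Subset.antisymm (fun _ hf => ⟨hH.1 hf, subset_biUnion_of_mem (u := fun h => support h) hf⟩)
    fun _ hg => hH.mem_of_support_subset hg.1 hg.2

lemma isUpperSet_iUnion_support [Archimedean G] [Nontrivial G] (hH : IsIsolated T G H) :
    IsUpperSet (⋃ h ∈ H, support h) := by
  intro t t' htt' ht
  obtain ⟨h, hh, hht⟩ := mem_iUnion₂.1 ht
  obtain ⟨a, ha⟩ := exists_gt (0 : G)
  have hmem : Pi.single t' a ∈ H :=
    hH.mem_of_pos_lead (single_mem_Gamma t' a) (fun r hr => by simp [hr.ne])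
      (by simpa using ha) hh htt' hht
  exact mem_iUnion₂.2 ⟨_, hmem, by simpa using ha.ne'⟩

end IsIsolated

lemma setOf_isIsolated_eq_image {T G : Type*} [LinearOrder T] [AddCommGroup G] [LinearOrder G]
    [IsOrderedAddMonoid G] [Archimedean G] [Nontrivial G] :
    {H : Set (T → G) | IsIsolated T G H} = gammaOn T G '' {U | IsUpperSet U} := by
  ext H
  constructor
  · intro hH
    exact ⟨_, hH.isUpperSet_iUnion_support, hH.eq_gammaOn.symm⟩
  · rintro ⟨U, hU, rfl⟩
    exact isIsolated_gammaOn hU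

theorem stmt11_general {T G : Type*} [LinearOrder T]
    [AddCommGroup G] [LinearOrder G] [IsOrderedAddMonoid G] [Archimedean G] [Nontrivial G] :
    IPSet {H : Set (T → G) | IsIsolated T G H} = {S | ∃ t : T, S = dHt T G t} := by
  rw [setOf_isIsolated_eq_image, IPSet_image fun _ _ _ _ => gammaOn_subset_gammaOn_iff,
    IPSet_setOf_isUpperSet]
  ext S
  simp [dHt_eq_gammaOn, eq_comm]

theorem stmt11 {T G : Type*} [LinearOrder T] [Nonempty T]
    [AddCommGroup G] [LinearOrder G] [IsOrderedAddMonoid G] [Archimedean G] [Nontrivial G] :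
    IPSet {H : Set (T → G) | IsIsolated T G H} = {S | ∃ t : T, S = dHt T G t} :=
  stmt11_general
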